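/- Let ω be a positive linear functional on A, H_ω := A/J_ω with projection f ↦ Ψ_f and inner product ⟨Ψ_f, Ψ_g⟩ := ω(f̄*g). Then π_ω(f)Ψ_g := Ψ_{f*g} is well defined and is a representation of A on H_ω (π_ω(f*g) = π_ω(f)∘π_ω(g), π_ω is ℂ((λ))-linear in f), and it is a *-representation: ⟨Ψ_h, π_ω(f)Ψ_g⟩ = ⟨π_ω(f̄)Ψ_h, Ψ_g⟩ for all f, g, h ∈ A. -/

import Mathlib

/-!
Apart from well-definedness, every claim is ring arithmetic in `A`. Well-definedness says that
`J` is a left ideal: if `ω(d̄ d) = 0` and `b = f̄ f d`, then for every real `t`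
`0 ≤ ω((d + t b)‾ (d + t b)) = 2 t ω(d̄ b) + t² ω(b̄ b)`, where `ω(d̄ b) = ω((f d)‾ (f d)) ≥ 0`.
In the ordered field `ℝ((λ))` the choice `t = -λ^N` with `N ≫ 0` makes the linear term dominate,
so `ω(d̄ b) = 0`, i.e. `f d ∈ J`.
-/

/-- Coefficientwise complex conjugation on `ℂ((λ))`. -/
noncomputable def conjL (x : LaurentSeries ℂ) : LaurentSeries ℂ where
  coeff := fun m => (starRingEnd ℂ) (x.coeff m)
  isPWO_support' := by
    refine x.isPWO_support.mono ?_
    intro m hm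
    simp only [Function.mem_support, ne_eq, map_eq_zero] at hm ⊢
    exact hm

/-- An element of `ℂ((λ))` lies in `ℝ((λ))` and is `≥ 0` there: all coefficients are
real, and either it is `0` or the coefficient of the lowest nonvanishing power of `λ`
is positive. -/
noncomputable def IsRealNonneg (x : LaurentSeries ℂ) : Prop :=
  (∀ m, (x.coeff m).im = 0) ∧ (x = 0 ∨ 0 < (x.coeff x.order).re)

lemma IsRealNonneg.leadingCoeff_re_pos {x : LaurentSeries ℂ} (hx : IsRealNonneg x) (hx0 : x ≠ 0) :
    0 < x.leadingCoeff.re := by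
  rw [HahnSeries.leadingCoeff_eq]
  exact hx.2.resolve_left hx0

lemma conjL_single (N : ℤ) (r : ℂ) :
    conjL (HahnSeries.single N r) = HahnSeries.single N (starRingEnd ℂ r) := by
  ext m
  by_cases h : m = N <;> simp [conjL, h]

lemma IsRealNonneg.eq_zero_of_forall_real_quadratic {s q : LaurentSeries ℂ} (hs : IsRealNonneg s)
    (h : ∀ t, conjL t = t → IsRealNonneg (2 * t * s + t * t * q)) : s = 0 := by
  by_contra hs0
  set N := s.order - q.order + 1
  set t : LaurentSeries ℂ := HahnSeries.single N (-1)
  have ht : conjL t = t := by rw [conjL_single, map_neg, map_one]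
  have h2t : 2 * t = HahnSeries.single N (-2) := by
    rw [← HahnSeries.single_zero_ofNat, HahnSeries.single_mul_single]
    simp
  have hlt : (2 * t * s).orderTop < (t * t * q).orderTop := by
    rw [h2t]
    by_cases hq : q = 0
    · simp [hq, hs0]
    · simp only [HahnSeries.orderTop_mul, t, HahnSeries.orderTop_single, ne_eq, neg_eq_zero,
        one_ne_zero, two_ne_zero, not_false_eq_true,
        ← HahnSeries.order_eq_orderTop_of_ne_zero hs0, ← HahnSeries.order_eq_orderTop_of_ne_zero hq]
      norm_cast
      omega
  have hlead : (2 * t * s + t * t * q).leadingCoeff = -2 * s.leadingCoeff := by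
    rw [HahnSeries.leadingCoeff_add_eq_left hlt, h2t, HahnSeries.leadingCoeff_mul,
      HahnSeries.leadingCoeff_of_single]
  have hne : 2 * t * s + t * t * q ≠ 0 := by
    rw [← HahnSeries.leadingCoeff_ne_zero, hlead]
    simpa using hs0
  have hneg := (h t ht).leadingCoeff_re_pos hne
  rw [hlead] at hneg
  simp only [neg_mul, Complex.neg_re, Complex.mul_re, Complex.re_ofNat, Complex.im_ofNat, zero_mul,
    sub_zero, Left.neg_pos_iff] at hneg
  linarith [hs.leadingCoeff_re_pos hs0]

section PositiveFunctional

variable {A : Type*} [Ring A] [Algebra (LaurentSeries ℂ) A] [StarRing A]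
  (ω : A →ₗ[LaurentSeries ℂ] LaurentSeries ℂ)

lemma apply_star_add_smul_mul_add_smul
    (hsm : ∀ (c : LaurentSeries ℂ) (a : A), star (c • a) = conjL c • star a)
    {t : LaurentSeries ℂ} (ht : conjL t = t) (a b : A) :
    ω (star (a + t • b) * (a + t • b)) = ω (star a * a)
      + t * (ω (star a * b) + ω (star b * a)) + t * t * ω (star b * b) := by
  simp only [star_add, hsm, ht, add_mul, mul_add, mul_smul_comm, smul_mul_assoc, map_add,
    map_smul, smul_eq_mul]
  ring

lemma apply_star_mul_self_mul_left_eq_zero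
    (hsm : ∀ (c : LaurentSeries ℂ) (a : A), star (c • a) = conjL c • star a)
    (hpos : ∀ f : A, IsRealNonneg (ω (star f * f))) {d : A} (hd : ω (star d * d) = 0) (f : A) :
    ω (star (f * d) * (f * d)) = 0 := by
  set b := star f * f * d
  have hfd : star (f * d) * (f * d) = star d * b := by simp only [b, star_mul, mul_assoc]
  have hb : star b * d = star d * b := by simp only [b, star_mul, star_star, mul_assoc]
  refine IsRealNonneg.eq_zero_of_forall_real_quadratic (q := ω (star b * b)) (hpos _)
    fun t ht => ?_
  have key := hpos (d + t • b)
  rw [apply_star_add_smul_mul_add_smul ω hsm ht, hd, hb, ← hfd] at key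
  convert key using 1
  ring

end PositiveFunctional

/-- The GNS representation `π_ω(f) Ψ_g := Ψ_{f*g}` on `H_ω = A ⧸ J_ω` is well
defined, is a `ℂ((λ))`-linear representation of `A`, and is a `*`-representation:
`⟨Ψ_h, π_ω(f)Ψ_g⟩ = ⟨π_ω(f̄)Ψ_h, Ψ_g⟩`. -/
theorem gns_representation
    {A : Type*} [Ring A] [Algebra (LaurentSeries ℂ) A] [StarRing A]
    (hsm : ∀ (c : LaurentSeries ℂ) (a : A), star (c • a) = conjL c • star a)
    (ω : A →ₗ[LaurentSeries ℂ] LaurentSeries ℂ)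
    (hpos : ∀ f : A, IsRealNonneg (ω (star f * f)))
    (J : Submodule (LaurentSeries ℂ) A)
    (hJ : ∀ f : A, f ∈ J ↔ ω (star f * f) = 0) :
    -- π_ω(f) Ψ_g := Ψ_{f*g} is well defined on the quotient H_ω = A ⧸ J
    (∀ f g g' : A,
        (Submodule.Quotient.mk g : A ⧸ J) = Submodule.Quotient.mk g' →
        (Submodule.Quotient.mk (f * g) : A ⧸ J) = Submodule.Quotient.mk (f * g')) ∧
    -- each π_ω(f) is a linear operator
    (∀ (f g h : A) (c : LaurentSeries ℂ),
        (Submodule.Quotient.mk (f * (c • g + h)) : A ⧸ J)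
          = c • Submodule.Quotient.mk (f * g) + Submodule.Quotient.mk (f * h)) ∧
    -- multiplicativity: π_ω(f*g) = π_ω(f) ∘ π_ω(g)
    (∀ f g h : A,
        (Submodule.Quotient.mk ((f * g) * h) : A ⧸ J)
          = Submodule.Quotient.mk (f * (g * h))) ∧
    -- ℂ((λ))-linearity of f ↦ π_ω(f)
    (∀ (c : LaurentSeries ℂ) (f f' g : A),
        (Submodule.Quotient.mk ((c • f + f') * g) : A ⧸ J)
          = c • Submodule.Quotient.mk (f * g) + Submodule.Quotient.mk (f' * g)) ∧
    -- *-representation property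
    (∀ f g h : A, ω (star h * (f * g)) = ω (star (star f * h) * g)) := by
  refine ⟨fun f g g' hg => ?_, fun f g h c => ?_, fun f g h => by rw [mul_assoc],
    fun c f f' g => ?_, fun f g h => by rw [star_mul, star_star, mul_assoc]⟩
  · rw [Submodule.Quotient.eq, hJ] at hg ⊢
    rw [← mul_sub]
    exact apply_star_mul_self_mul_left_eq_zero ω hsm hpos hg f
  · rw [mul_add, mul_smul_comm, Submodule.Quotient.mk_add, Submodule.Quotient.mk_smul]
  · rw [add_mul, smul_mul_assoc, Submodule.Quotient.mk_add, Submodule.Quotient.mk_smul]
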